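/- Let Ω ⊆ ℂⁿ be a bounded pseudoconvex domain with 0 ∈ Ω, and assume that for every X ∈ ℂⁿ the limsup defining the Azukawa pseudometric with pole 0 converges: A_{Ω,0}(X) = lim_{λ→0} (g_{Ω,0}(λX) − log|λ|). For t < 0 set Ω_t := {z ∈ Ω : g_{Ω,0}(z) < t/2}. Then the set-theoretic limit superior satisfies limsup_{t→−∞} (e^{−t/2} Ω_t) ⊆ closure(I_{Ω,0}); that is, every point z such that for every p < 0 there exists t < p with e^{t/2} z ∈ Ω_t belongs to the closure of the Azukawa indicatrix I_{Ω,0} := {X ∈ ℂⁿ : A_{Ω,0}(X) < 0}. -/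

import Mathlib

open MeasureTheory Filter Set Metric Complex
open scoped ENNReal Topology Pointwise

noncomputable section

/-- Sub-mean value inequality for an `EReal`-valued function at center `z` and radius `r`:
the value at the center is at most the circle average, where the (upper) integral of the
`EReal`-valued function over the circle is expressed via continuous real majorants. -/
def SubmeanAt (u : ℂ → EReal) (z : ℂ) (r : ℝ) : Prop :=
  ∀ g : ℝ → ℝ, Continuous g →
    (∀ θ : ℝ, u (z + r * Complex.exp (θ * Complex.I)) ≤ (g θ : EReal)) →
    u z ≤ (((2 * Real.pi)⁻¹ * ∫ θ in (0:ℝ)..(2 * Real.pi), g θ : ℝ) : EReal)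

/-- A function `u : ℂ → [-∞, ∞)` is subharmonic on `U` if it is upper semicontinuous on `U`
and satisfies the sub-mean value inequality on every closed disc contained in `U`. -/
def SubharmonicOn (u : ℂ → EReal) (U : Set ℂ) : Prop :=
  UpperSemicontinuousOn u U ∧
    ∀ z ∈ U, ∀ r : ℝ, 0 < r → Metric.closedBall z r ⊆ U → SubmeanAt u z r

/-- A function `u : F → [-∞, ∞)` is plurisubharmonic on `U` if it is upper semicontinuous
on `U` and its restriction to every complex line is subharmonic. -/
def PshOn {F : Type*} [NormedAddCommGroup F] [NormedSpace ℂ F]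
    (u : F → EReal) (U : Set F) : Prop :=
  UpperSemicontinuousOn u U ∧
    ∀ a b : F, SubharmonicOn (fun l : ℂ => u (a + l • b)) {l : ℂ | a + l • b ∈ U}

/-- The competitors for the pluricomplex Green function of `Ω` with pole `w`: negative
plurisubharmonic functions `u` on `Ω` with `u - log ‖· - w‖` bounded above near `w`. -/
def greenCand {F : Type*} [NormedAddCommGroup F] [NormedSpace ℂ F]
    (Ω : Set F) (w : F) : Set (F → EReal) :=
  {u | PshOn u Ω ∧ (∀ z ∈ Ω, u z < 0) ∧
    ∃ C : ℝ, ∃ r : ℝ, 0 < r ∧ ∀ z ∈ Ω, z ≠ w → ‖z - w‖ < r →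
      u z ≤ ((Real.log ‖z - w‖ + C : ℝ) : EReal)}

/-- The pluricomplex Green function of `Ω` with pole at `w`. -/
def pcGreen {F : Type*} [NormedAddCommGroup F] [NormedSpace ℂ F]
    (Ω : Set F) (w : F) (z : F) : EReal :=
  ⨆ u ∈ greenCand Ω w, u z

/-- The logarithm of the Azukawa pseudometric of `Ω` with pole `w`, in direction `X`:
`A_{Ω,w}(X) = limsup_{λ → 0, λ ≠ 0} (g_{Ω,w}(w + λX) - log |λ|)`. -/
def azukawa {F : Type*} [NormedAddCommGroup F] [NormedSpace ℂ F]
    (Ω : Set F) (w : F) (X : F) : EReal :=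
  Filter.limsup
    (fun l : ℂ => pcGreen Ω w (w + l • X) - ((Real.log ‖l‖ : ℝ) : EReal))
    (nhdsWithin 0 {0}ᶜ)

/-- A bounded open set `Ω` is hyperconvex if it admits a continuous negative
plurisubharmonic exhaustion function. -/
def Hyperconvex {F : Type*} [NormedAddCommGroup F] [NormedSpace ℂ F]
    (Ω : Set F) : Prop :=
  IsOpen Ω ∧ Bornology.IsBounded Ω ∧
    ∃ ρ : F → ℝ, ContinuousOn ρ Ω ∧ PshOn (fun z => (ρ z : EReal)) Ω ∧
      (∀ z ∈ Ω, ρ z < 0) ∧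
      ∀ c : ℝ, 0 < c →
        IsCompact (closure {z ∈ Ω | ρ z < -c}) ∧ closure {z ∈ Ω | ρ z < -c} ⊆ Ω

/-- An open set `Ω` is pseudoconvex if `-log dist(·, ∂Ω)` is plurisubharmonic on `Ω`. -/
def Pseudoconvex {F : Type*} [NormedAddCommGroup F] [NormedSpace ℂ F]
    (Ω : Set F) : Prop :=
  IsOpen Ω ∧
    PshOn (fun z => ((-Real.log (Metric.infDist z (frontier Ω)) : ℝ) : EReal)) Ω

/-- `e^{-x} ∈ [0, ∞]` for `x : EReal`. -/
def negExp (x : EReal) : ℝ≥0∞ :=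
  if x = ⊥ then ⊤ else if x = ⊤ then 0 else ENNReal.ofReal (Real.exp (-x.toReal))

/-- The logarithm `ℝ → [-∞, ∞)`, with `log x = -∞` for `x ≤ 0`. -/
def elog (x : ℝ) : EReal := if x ≤ 0 then ⊥ else ((Real.log x : ℝ) : EReal)

/-- `e^x ∈ [0, ∞)` for `x : EReal`, with `e^{-∞} = 0` (and junk value `0` at `+∞`). -/
def expReal (x : EReal) : ℝ :=
  if x = ⊥ then 0 else if x = ⊤ then 0 else Real.exp x.toReal

lemma ereal_sub_add (x : EReal) (a b : ℝ) :
    x - ((a + b : ℝ) : EReal) + ((b : ℝ) : EReal) = x - ((a : ℝ) : EReal) := by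
  induction x with
  | bot => simp [EReal.bot_sub, EReal.bot_add]
  | coe x =>
      norm_cast
      ring
  | top => rw [EReal.top_sub_coe, EReal.top_add_coe, EReal.top_sub_coe]

/-- For a bounded pseudoconvex domain `Ω ⊆ ℂⁿ` with `0 ∈ Ω`, assuming the
`limsup` defining the Azukawa pseudometric with pole `0` is a limit, and setting
`Ω_t = {g_{Ω,0} < t/2}`, every point of `limsup_{t → -∞} (e^{-t/2} Ω_t)` — i.e. every `z`
such that for all `p < 0` there is `t < p` with `e^{t/2} z ∈ Ω_t` — lies in the closure of
the Azukawa indicatrix `I_{Ω,0}`. -/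
theorem limsup_rescaled_sublevels_subset_closure_indicatrix (n : ℕ) (Ω : Set (Fin n → ℂ))
    (hconn : IsConnected Ω) (hbdd : Bornology.IsBounded Ω) (hpsc : Pseudoconvex Ω)
    (h0 : (0 : Fin n → ℂ) ∈ Ω)
    (hconv : ∀ X : Fin n → ℂ,
      Filter.Tendsto
        (fun l : ℂ => pcGreen Ω 0 (l • X) - ((Real.log ‖l‖ : ℝ) : EReal))
        (nhdsWithin 0 {0}ᶜ) (nhds (azukawa Ω 0 X))) :
    ∀ z : Fin n → ℂ,
      (∀ p : ℝ, p < 0 → ∃ t : ℝ, t < p ∧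
        (Real.exp (t / 2) : ℂ) • z ∈ Ω ∧
        pcGreen Ω 0 ((Real.exp (t / 2) : ℂ) • z) < ((t / 2 : ℝ) : EReal)) →
      z ∈ closure {X : Fin n → ℂ | azukawa Ω 0 X < 0} := by
  intro z hz
  set A := azukawa Ω 0 z with hAdef
  -- Step 1: A ≤ 0
  have hchoice : ∀ k : ℕ, ∃ t : ℝ, t < -((k : ℝ) + 1) ∧ (Real.exp (t / 2) : ℂ) • z ∈ Ω ∧
      pcGreen Ω 0 ((Real.exp (t / 2) : ℂ) • z) < ((t / 2 : ℝ) : EReal) := by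
    intro k
    exact hz (-((k : ℝ) + 1)) (by have hk : (0:ℝ) ≤ (k:ℝ) := Nat.cast_nonneg k; linarith)
  choose t ht hmem hg using hchoice
  set lam : ℕ → ℂ := fun k => ((Real.exp (t k / 2) : ℝ) : ℂ) with hlamdef
  have hlamne : ∀ k, lam k ≠ 0 := by
    intro k
    simp only [hlamdef, ne_eq, Complex.ofReal_eq_zero]
    exact (Real.exp_pos _).ne'
  have habs : ∀ k, ‖lam k‖ = Real.exp (t k / 2) := by
    intro k
    show ‖((Real.exp (t k / 2) : ℝ) : ℂ)‖ = Real.exp (t k / 2)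
    rw [Complex.norm_real, Real.norm_eq_abs, abs_of_pos (Real.exp_pos _)]
  have hlam0 : Tendsto lam atTop (𝓝[≠] (0 : ℂ)) := by
    apply tendsto_nhdsWithin_of_tendsto_nhds_of_eventually_within
    · rw [tendsto_zero_iff_norm_tendsto_zero]
      have hub : Tendsto (fun k : ℕ => Real.exp (-((k : ℝ) + 1) / 2)) atTop (𝓝 0) := by
        apply Real.tendsto_exp_atBot.comp
        apply Tendsto.atBot_div_const (by norm_num : (0:ℝ) < 2)
        exact tendsto_neg_atBot_iff.mpr
          (tendsto_atTop_add_const_right _ _ tendsto_natCast_atTop_atTop)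
      refine tendsto_of_tendsto_of_tendsto_of_le_of_le tendsto_const_nhds hub
        (fun k => norm_nonneg _) (fun k => ?_)
      have : ‖lam k‖ = Real.exp (t k / 2) := habs k
      rw [this]
      exact Real.exp_le_exp.mpr (by linarith [ht k])
    · exact Filter.Eventually.of_forall fun k => hlamne k
  have hseq : Tendsto (fun k => pcGreen Ω 0 (lam k • z)
      - ((Real.log ‖lam k‖ : ℝ) : EReal)) atTop (𝓝 A) := (hconv z).comp hlam0
  have hA0 : A ≤ 0 := by
    refine le_of_tendsto hseq (Filter.Eventually.of_forall fun k => ?_)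
    rw [habs k, Real.log_exp]
    refine le_of_lt ?_
    rw [EReal.sub_lt_iff (Or.inl (EReal.coe_ne_bot _)) (Or.inl (EReal.coe_ne_top _)), zero_add]
    exact hg k
  -- Step 2: scaling
  have key : ∀ r : ℝ, 0 < r → r < 1 → azukawa Ω 0 ((r : ℂ) • z) < 0 := by
    intro r hr0 hr1
    have hmul : Tendsto (fun l : ℂ => l * (r : ℂ)) (𝓝[≠] 0) (𝓝[≠] (0 : ℂ)) := by
      apply tendsto_nhdsWithin_of_tendsto_nhds_of_eventually_within
      · have h := (continuous_mul_right (r : ℂ)).tendsto (0 : ℂ)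
        rw [zero_mul] at h
        exact h.mono_left nhdsWithin_le_nhds
      · filter_upwards [self_mem_nhdsWithin] with l hl
        simp only [mem_compl_iff, mem_singleton_iff, mul_eq_zero, not_or] at *
        exact ⟨hl, by exact_mod_cast hr0.ne'⟩
    have h1 : Tendsto (fun l : ℂ => pcGreen Ω 0 ((l * r) • z)
        - ((Real.log ‖l * r‖ : ℝ) : EReal)) (𝓝[≠] 0) (𝓝 A) :=
      (hconv z).comp hmul
    have h2 : Tendsto (fun l : ℂ => (pcGreen Ω 0 ((l * r) • z)
        - ((Real.log ‖l * r‖ : ℝ) : EReal)) + ((Real.log r : ℝ) : EReal))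
        (𝓝[≠] 0) (𝓝 (A + ((Real.log r : ℝ) : EReal))) := by
      exact (EReal.continuousAt_add (p := (A, ((Real.log r : ℝ) : EReal)))
        (Or.inr (EReal.coe_ne_bot _)) (Or.inr (EReal.coe_ne_top _))).tendsto.comp
        (h1.prodMk_nhds tendsto_const_nhds)
    have h3 : Tendsto (fun l : ℂ => pcGreen Ω 0 (l • ((r : ℂ) • z))
        - ((Real.log ‖l‖ : ℝ) : EReal)) (𝓝[≠] 0)
        (𝓝 (A + ((Real.log r : ℝ) : EReal))) := by
      refine h2.congr' ?_
      filter_upwards [self_mem_nhdsWithin] with l hl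
      have hl0 : l ≠ 0 := hl
      have habs' : ‖l * r‖ = ‖l‖ * r := by
        rw [norm_mul, Complex.norm_real, Real.norm_eq_abs, abs_of_pos hr0]
      rw [smul_smul, habs', Real.log_mul (by simpa using hl0) hr0.ne']
      exact ereal_sub_add _ _ _
    have heq : azukawa Ω 0 ((r : ℂ) • z) = A + ((Real.log r : ℝ) : EReal) :=
      tendsto_nhds_unique (hconv ((r : ℂ) • z)) h3
    rw [heq]
    calc A + ((Real.log r : ℝ) : EReal) ≤ 0 + ((Real.log r : ℝ) : EReal) :=
          add_le_add_left hA0 _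
      _ = ((Real.log r : ℝ) : EReal) := zero_add _
      _ < 0 := by exact_mod_cast Real.log_neg hr0 hr1
  -- Step 3: closure
  rw [mem_closure_iff_seq_limit]
  refine ⟨fun k : ℕ => (((1 - ((k : ℝ) + 2)⁻¹ : ℝ) : ℂ)) • z, fun k => ?_, ?_⟩
  · have hk2 : (0 : ℝ) < (k : ℝ) + 2 := by positivity
    have hinv1 : ((k : ℝ) + 2)⁻¹ < 1 := by
      rw [inv_lt_one_iff₀]
      right; linarith
    exact key _ (by linarith) (by have h2 : (0:ℝ) < ((k:ℝ)+2)⁻¹ := inv_pos.mpr hk2; linarith)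
  · have hr : Tendsto (fun k : ℕ => (1 - ((k : ℝ) + 2)⁻¹ : ℝ)) atTop (𝓝 1) := by
      have h1 : Tendsto (fun k : ℕ => ((k : ℝ) + 2)) atTop atTop :=
        tendsto_atTop_add_const_right atTop (2 : ℝ) tendsto_natCast_atTop_atTop
      have : Tendsto (fun k : ℕ => ((k : ℝ) + 2)⁻¹) atTop (𝓝 0) := h1.inv_tendsto_atTop
      simpa using tendsto_const_nhds.sub this
    have hc : Tendsto (fun k : ℕ => ((1 - ((k : ℝ) + 2)⁻¹ : ℝ) : ℂ)) atTop (𝓝 ((1:ℝ) : ℂ)) :=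
      (Complex.continuous_ofReal.tendsto _).comp hr
    have := hc.smul_const z
    simpa using this
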